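/- arXiv:0711.2248 — 5 statements merged into one kernel-verified Lean document; each statement's English description precedes it below -/
import Mathlib

section
/- Under the isometry Ξ : L²(S¹,ℂⁿ) → L²(S¹,ℂ) (sending e_{α,k} to z^{nk+α−1}), a closed subspace W ⊆ L²(S¹,ℂⁿ) satisfies z·W ⊆ W if and only if the subspace Ξ(W) ⊆ L²(S¹,ℂ) satisfies zⁿ·Ξ(W) ⊆ Ξ(W). -/
/-! `Ξ` is injective (it is precomposition with the bijection `j ↦ (j / n, j % n)` of `ℤ` onto
`ℤ × Fin n`) and intertwines the shift by one with the shift by `n`, because `j - n` has the same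
remainder as `j` and quotient one less. An injective intertwiner transports invariant subspaces
exactly. -/

/-- The isometry `Ξ` in the Fourier-coefficient model: a vector-valued
coefficient family `f : ℤ × Fin n → ℂ` (component `α`, frequency `k`,
representing `e_{α,k} = z^k` in slot `α`) is sent to the scalar coefficient
family `j ↦ f (j / n, j % n)`, i.e. `e_{α,k} ↦ z^{nk+α}`. -/
def xiMap (n : ℕ) (hn : 0 < n) : ((ℤ × Fin n) → ℂ) →ₗ[ℂ] (ℤ → ℂ) where
  toFun f := fun j =>
    f (j / (n : ℤ), ⟨(j % (n : ℤ)).toNat, by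
      have h1 : 0 ≤ j % (n : ℤ) := Int.emod_nonneg j (by exact_mod_cast hn.ne')
      have h2 : j % (n : ℤ) < (n : ℤ) := Int.emod_lt_of_pos j (by exact_mod_cast hn)
      omega⟩)
  map_add' _ _ := rfl
  map_smul' _ _ := rfl

/-- Multiplication by `z` on `L²(S¹,ℂⁿ)` in the Fourier model: shift every
frequency by one (in each component). -/
def mulZVec (n : ℕ) : ((ℤ × Fin n) → ℂ) →ₗ[ℂ] ((ℤ × Fin n) → ℂ) where
  toFun f := fun p => f (p.1 - 1, p.2)
  map_add' _ _ := rfl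
  map_smul' _ _ := rfl

/-- Multiplication by `zⁿ` on `L²(S¹,ℂ)` in the Fourier model: shift the
frequency by `n`. -/
def mulZPowScalar (n : ℕ) : (ℤ → ℂ) →ₗ[ℂ] (ℤ → ℂ) where
  toFun f := fun j => f (j - (n : ℤ))
  map_add' _ _ := rfl
  map_smul' _ _ := rfl

theorem Submodule.map_le_self_iff_of_injective_of_comp_eq {R M N : Type*} [Semiring R]
    [AddCommMonoid M] [AddCommMonoid N] [Module R M] [Module R N]
    {e : M →ₗ[R] N} (he : Function.Injective e) {S : M →ₗ[R] M} {T : N →ₗ[R] N}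
    (h : e ∘ₗ S = T ∘ₗ e) (W : Submodule R M) :
    W.map S ≤ W ↔ (W.map e).map T ≤ W.map e := by
  rw [← Submodule.map_comp, ← h, Submodule.map_comp, Submodule.map_le_map_iff_of_injective he]

theorem xiMap_apply (n : ℕ) [NeZero n] (hn : 0 < n) (f : (ℤ × Fin n) → ℂ) :
    xiMap n hn f = f ∘ Int.divModEquiv n := by
  funext j
  refine congrArg f (Prod.ext rfl (Fin.ext ?_))
  exact (Nat.mod_eq_of_lt (Fin.isLt _)).symm

theorem xiMap_injective (n : ℕ) (hn : 0 < n) : Function.Injective (xiMap n hn) := by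
  have := NeZero.of_pos hn
  intro f g hfg
  simp only [xiMap_apply] at hfg
  exact (Int.divModEquiv n).surjective.injective_comp_right hfg

theorem xiMap_comp_mulZVec (n : ℕ) (hn : 0 < n) :
    xiMap n hn ∘ₗ mulZVec n = mulZPowScalar n ∘ₗ xiMap n hn := by
  have hn' : (n : ℤ) ≠ 0 := by exact_mod_cast hn.ne'
  ext f j
  refine congrArg f (Prod.ext ?_ (Fin.ext ?_))
  · simp [Int.sub_ediv_of_dvd, Int.ediv_self hn']
  · simp

/-- Under the isometry `Ξ` (sending `e_{α,k}` to `z^{nk+α}`), a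
subspace `W ⊆ L²(S¹,ℂⁿ)` satisfies `z·W ⊆ W` if and only if
`Ξ(W) ⊆ L²(S¹,ℂ)` satisfies `zⁿ·Ξ(W) ⊆ Ξ(W)`. -/
theorem z_invariant_iff_zpow_invariant (n : ℕ) (hn : 0 < n)
    (W : Submodule ℂ ((ℤ × Fin n) → ℂ)) :
    W.map (mulZVec n) ≤ W ↔
      (W.map (xiMap n hn)).map (mulZPowScalar n) ≤ W.map (xiMap n hn) :=
  Submodule.map_le_self_iff_of_injective_of_comp_eq (xiMap_injective n hn)
    (xiMap_comp_mulZVec n hn) W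
end

section
/- Under the isometry Ξ : L²(S¹,ℂⁿ) → L²(S¹,ℂ) with Ξ(f₀,…,f_{n−1})(z) = Σ_{i=0}^{n−1} z^i f_i(zⁿ), multiplication by z on L²(S¹,ℂ) corresponds to multiplication by the matrix Λ on L²(S¹,ℂⁿ): that is, Ξ(Λ·f) = z·Ξ(f) for all f ∈ L²(S¹,ℂⁿ), where Λ is the n×n matrix-valued function with Λ_{i+1,i} = 1 (1 ≤ i ≤ n−1), Λ_{1,n}(z) = z, and zeros elsewhere. -/
/-- Multiplication by the matrix-valued loop `Λ` (with `Λ_{i+1,i} = 1`,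
`Λ_{1,n}(z) = z`) on `L²(S¹,ℂⁿ)` in the Fourier model: component `α ≥ 1` of
`Λf` is component `α−1` of `f`, and component `0` of `Λf` is `z` times
component `n−1` of `f` (frequency shifted by one). -/
def mulLambda (n : ℕ) (hn : 0 < n) : ((ℤ × Fin n) → ℂ) →ₗ[ℂ] ((ℤ × Fin n) → ℂ) where
  toFun f := fun p =>
    if (p.2 : ℕ) = 0 then f (p.1 - 1, ⟨n - 1, by omega⟩)
    else f (p.1, ⟨(p.2 : ℕ) - 1, by have := p.2.isLt; omega⟩)
  map_add' f g := by funext p; by_cases h : (p.2 : ℕ) = 0 <;> simp [h]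
  map_smul' c f := by funext p; by_cases h : (p.2 : ℕ) = 0 <;> simp [h]

/-- Multiplication by `z` on `L²(S¹,ℂ)` in the Fourier model. -/
def mulZScalar : (ℤ → ℂ) →ₗ[ℂ] (ℤ → ℂ) where
  toFun f := fun j => f (j - 1)
  map_add' _ _ := rfl
  map_smul' _ _ := rfl

namespace Int

variable {n j : ℤ}

theorem sub_one_ediv_emod_of_emod_eq_zero (hn : 0 < n) (h : j % n = 0) :
    (j - 1) / n = j / n - 1 ∧ (j - 1) % n = n - 1 :=
  (Int.ediv_emod_unique hn).mpr
    ⟨by linear_combination mul_ediv_add_emod j n - h, by omega, by omega⟩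

theorem sub_one_ediv_emod_of_emod_ne_zero (hn : 0 < n) (h : j % n ≠ 0) :
    (j - 1) / n = j / n ∧ (j - 1) % n = j % n - 1 := by
  have := emod_nonneg j hn.ne'
  have := emod_lt_of_pos j hn
  exact (Int.ediv_emod_unique hn).mpr
    ⟨by linear_combination mul_ediv_add_emod j n, by omega, by omega⟩

end Int

/-- under `Ξ`, multiplication by the matrix `Λ` on `L²(S¹,ℂⁿ)`
corresponds to multiplication by `z` on `L²(S¹,ℂ)`:
`Ξ(Λ·f) = z·Ξ(f)` for all `f`. -/
theorem xi_intertwines_lambda (n : ℕ) (hn : 0 < n) :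
    ∀ f : (ℤ × Fin n) → ℂ,
      xiMap n hn (mulLambda n hn f) = mulZScalar (xiMap n hn f) := by
  intro f
  funext j
  have hn' : (0 : ℤ) < n := by exact_mod_cast hn
  have hj : 0 ≤ j % n := Int.emod_nonneg j hn'.ne'
  simp only [xiMap, mulLambda, mulZScalar, LinearMap.coe_mk, AddHom.coe_mk]
  -- `Λ` and `z` both step the index back by one, borrowing from the frequency at component `0`.
  split_ifs with h
  · obtain ⟨hq, hr⟩ := Int.sub_one_ediv_emod_of_emod_eq_zero (j := j) hn' (by omega)
    congr 1
    ext
    · exact hq.symm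
    · dsimp only; simp only [hr]; omega
  · obtain ⟨hq, hr⟩ := Int.sub_one_ediv_emod_of_emod_ne_zero (j := j) hn' (by omega)
    congr 1
    ext
    · exact hq.symm
    · dsimp only; simp only [hr]; omega
end

section
/- Let γ : S¹ → GL(n,ℂ) be an invertible matrix-valued loop with Fourier coefficients satisfying Σ_k |k|‖γ^{(k)}‖² < ∞. Then the operator I − T(γ)T(γ^{−1}) on ℓ²(ℕ, ℂⁿ) is trace class, where T(·) denotes the block Toeplitz operator. -/
open scoped ENNReal

/-- The Hilbert space `ℓ²(ℕ, ℂⁿ)`. -/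
noncomputable abbrev L2Seq (n : ℕ) := lp (fun _ : ℕ => EuclideanSpace ℂ (Fin n)) 2

/-- The standard orthonormal basis vector of `ℓ²(ℕ, ℂⁿ)` supported at block
`i`, coordinate `a`. -/
noncomputable def stdVec (n : ℕ) (i : ℕ) (a : Fin n) : L2Seq n :=
  lp.single 2 i (EuclideanSpace.single a (1 : ℂ))

/-- An operator on `ℓ²(ℕ, ℂⁿ)` is Hilbert–Schmidt if the squared norms of the
images of the (standard) orthonormal basis vectors are summable. -/
def IsHilbertSchmidtOp (n : ℕ) (A : L2Seq n →L[ℂ] L2Seq n) : Prop :=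
  Summable fun p : ℕ × Fin n => ‖A (stdVec n p.1 p.2)‖ ^ 2

/-!
By the Toeplitz product formula, the `(i, j)` block of `T(γ) T(γ⁻¹)` is the part `k ≥ 0` of
the Laurent convolution `∑_{k ∈ ℤ} γ^{(i-k)} (γ⁻¹)^{(k-j)} = δᵢⱼ`. Hence the `(i, j)` block of
`1 - T(γ) T(γ⁻¹)` is the part `k < 0`, which is the `(i, j)` block of the product of the Hankel
matrices `[γ^{(i+k+1)}]` and `[(γ⁻¹)^{(-(k+j+1))}]`. In a Hankel matrix the coefficient
`γ^{(m+1)}` occurs `m + 1` times, so the Besov condition says exactly that its entries are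
square-summable, and a square-summable matrix is the matrix of a Hilbert–Schmidt operator
(its columns `vⱼ` define `x ↦ ∑ ⟪eⱼ, x⟫ vⱼ`, bounded by Cauchy–Schwarz).
-/

open scoped InnerProductSpace

section SquareSummable

variable {ι : Type*}

theorem lp.summable_norm_sq {E : ι → Type*} [∀ i, NormedAddCommGroup (E i)] (f : lp E 2) :
    Summable fun i => ‖f i‖ ^ 2 := by
  simpa using (lp.memℓp f).summable (by norm_num : 0 < (2 : ℝ≥0∞).toReal)

theorem lp.norm_sq_eq_tsum {E : ι → Type*} [∀ i, NormedAddCommGroup (E i)] (f : lp E 2) :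
    ‖f‖ ^ 2 = ∑' i, ‖f i‖ ^ 2 := by
  simpa using lp.norm_rpow_eq_tsum (by norm_num : 0 < (2 : ℝ≥0∞).toReal) f

theorem memℓp_two_of_summable {E : ι → Type*} [∀ i, NormedAddCommGroup (E i)] {f : ∀ i, E i}
    (hf : Summable fun i => ‖f i‖ ^ 2) : Memℓp f 2 :=
  memℓp_gen (by simpa using hf)

variable {𝕜 F : Type*} [NormedField 𝕜] [NormedAddCommGroup F] [NormedSpace 𝕜 F]
  {c : ι → 𝕜} {v : ι → F}

theorem summable_norm_smul_of_sq (hc : Summable fun i => ‖c i‖ ^ 2)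
    (hv : Summable fun i => ‖v i‖ ^ 2) : Summable fun i => ‖c i • v i‖ := by
  simp only [norm_smul]
  exact Real.summable_mul_of_Lp_Lq_of_nonneg .two_two (fun _ => norm_nonneg _)
    (fun _ => norm_nonneg _) (by simpa using hc) (by simpa using hv)

theorem norm_tsum_smul_le_sqrt_mul_sqrt (hc : Summable fun i => ‖c i‖ ^ 2)
    (hv : Summable fun i => ‖v i‖ ^ 2) :
    ‖∑' i, c i • v i‖ ≤ √(∑' i, ‖c i‖ ^ 2) * √(∑' i, ‖v i‖ ^ 2) := by
  have hCS := Real.inner_le_Lp_mul_Lq_tsum_of_nonneg .two_two (fun i => norm_nonneg (c i))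
    (fun i => norm_nonneg (v i)) (by simpa using hc) (by simpa using hv)
  simp only [Real.rpow_two, ← Real.sqrt_eq_rpow] at hCS
  calc ‖∑' i, c i • v i‖ ≤ ∑' i, ‖c i • v i‖ :=
        norm_tsum_le_tsum_norm (summable_norm_smul_of_sq hc hv)
    _ = ∑' i, ‖c i‖ * ‖v i‖ := by simp only [norm_smul]
    _ ≤ _ := hCS

end SquareSummable

namespace HilbertBasis

variable {ι κ 𝕜 E F : Type*} [RCLike 𝕜] [NormedAddCommGroup E] [InnerProductSpace 𝕜 E]
  (b : HilbertBasis ι 𝕜 E)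

theorem ext_inner {x y : E} (h : ∀ i, ⟪b i, x⟫_𝕜 = ⟪b i, y⟫_𝕜) : x = y :=
  b.repr.injective <| lp.ext <| funext fun i => by simpa only [b.repr_apply_apply] using h i

theorem continuousLinearMap_ext [TopologicalSpace F] [AddCommMonoid F] [Module 𝕜 F] [T2Space F]
    {S T : E →L[𝕜] F} (h : ∀ i, S (b i) = T (b i)) : S = T :=
  ContinuousLinearMap.ext_on (Submodule.dense_iff_topologicalClosure_eq_top.2 b.dense_span)
    (Set.forall_mem_range.2 h)

theorem hasSum_inner_apply [NormedAddCommGroup F] [InnerProductSpace 𝕜 F] (S : E →L[𝕜] F)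
    (y : F) (x : E) : HasSum (fun i => ⟪y, S (b i)⟫_𝕜 * ⟪b i, x⟫_𝕜) ⟪y, S x⟫_𝕜 := by
  simpa [b.repr_apply_apply, inner_smul_right, mul_comm] using
    (b.hasSum_repr x).mapL ((innerSL 𝕜 y).comp S)

section constrL

variable [NormedAddCommGroup F] [NormedSpace 𝕜 F] [CompleteSpace F] {v : ι → F}

theorem summable_repr_smul (hv : Summable fun i => ‖v i‖ ^ 2) (x : E) :
    Summable fun i => b.repr x i • v i :=
  (summable_norm_smul_of_sq (lp.summable_norm_sq (b.repr x)) hv).of_norm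

noncomputable def constrL (hv : Summable fun i => ‖v i‖ ^ 2) : E →L[𝕜] F :=
  LinearMap.mkContinuous
    { toFun x := ∑' i, b.repr x i • v i
      map_add' x y := by
        simp only [map_add, lp.coeFn_add, Pi.add_apply, add_smul]
        exact (b.summable_repr_smul hv x).tsum_add (b.summable_repr_smul hv y)
      map_smul' c x := by
        simp only [map_smul, lp.coeFn_smul, Pi.smul_apply, smul_eq_mul, mul_smul]
        exact tsum_const_smul'' c }
    √(∑' i, ‖v i‖ ^ 2) fun x => by
      change ‖∑' i, b.repr x i • v i‖ ≤ _
      have hx : √(∑' i, ‖b.repr x i‖ ^ 2) = ‖x‖ := by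
        rw [← lp.norm_sq_eq_tsum, Real.sqrt_sq (norm_nonneg _), b.repr.norm_map]
      simpa only [hx, mul_comm] using
        norm_tsum_smul_le_sqrt_mul_sqrt (lp.summable_norm_sq (b.repr x)) hv

theorem constrL_apply_self (hv : Summable fun i => ‖v i‖ ^ 2) (i : ι) :
    b.constrL hv (b i) = v i := by
  classical
  change ∑' j, b.repr (b i) j • v j = v i
  rw [tsum_eq_single i fun j hj => by simp [b.repr_self, lp.single_apply, hj]]
  simp [b.repr_self]

end constrL

theorem exists_inner_apply_eq_of_summable_sq [NormedAddCommGroup F] [InnerProductSpace 𝕜 F]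
    [CompleteSpace F] (b' : HilbertBasis κ 𝕜 F) (K : κ → ι → 𝕜)
    (hK : Summable fun pq : κ × ι => ‖K pq.1 pq.2‖ ^ 2) :
    ∃ A : E →L[𝕜] F, (∀ p q, ⟪b' p, A (b q)⟫_𝕜 = K p q) ∧ Summable fun q => ‖A (b q)‖ ^ 2 := by
  have hcol (q : ι) : Summable fun p => ‖K p q‖ ^ 2 :=
    hK.comp_injective (i := fun p => (p, q)) fun _ _ h => (Prod.ext_iff.1 h).1
  let col (q : ι) : lp (fun _ : κ => 𝕜) 2 := ⟨fun p => K p q, memℓp_two_of_summable (hcol q)⟩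
  have hv : Summable fun q => ‖b'.repr.symm (col q)‖ ^ 2 := by
    simp only [LinearIsometryEquiv.norm_map, lp.norm_sq_eq_tsum]
    exact hK.prod_symm.prod
  refine ⟨b.constrL hv, fun p q => ?_, by simpa only [constrL_apply_self] using hv⟩
  rw [constrL_apply_self, ← b'.repr_apply_apply, LinearIsometryEquiv.apply_symm_apply]

end HilbertBasis

section BlockMatrix

variable {n : ℕ}

theorem inner_stdVec_left (i : ℕ) (a : Fin n) (y : L2Seq n) : ⟪stdVec n i a, y⟫_ℂ = y i a := by
  simp [stdVec, lp.inner_single_left, EuclideanSpace.inner_single_left]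

theorem stdVec_apply (j : ℕ) (b : Fin n) (i : ℕ) (a : Fin n) :
    stdVec n j b i a = if (i, a) = (j, b) then 1 else 0 := by
  by_cases hij : i = j
  · subst hij
    simp [stdVec]
  · simp [stdVec, hij]

theorem orthonormal_stdVec : Orthonormal ℂ fun p : ℕ × Fin n => stdVec n p.1 p.2 := by
  classical
  rw [orthonormal_iff_ite]
  intro p q
  rw [inner_stdVec_left, stdVec_apply]

theorem orthogonal_span_stdVec :
    (Submodule.span ℂ (Set.range fun p : ℕ × Fin n => stdVec n p.1 p.2))ᗮ = ⊥ := by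
  refine (Submodule.eq_bot_iff _).2 fun y hy => lp.ext <| funext fun i => PiLp.ext fun a => ?_
  rw [← inner_stdVec_left]
  exact Submodule.inner_right_of_mem_orthogonal
    (Submodule.subset_span (Set.mem_range_self (i, a))) hy

noncomputable def stdHilbertBasis (n : ℕ) : HilbertBasis (ℕ × Fin n) ℂ (L2Seq n) :=
  HilbertBasis.mkOfOrthogonalEqBot orthonormal_stdVec orthogonal_span_stdVec

@[simp]
theorem stdHilbertBasis_apply (p : ℕ × Fin n) : stdHilbertBasis n p = stdVec n p.1 p.2 := by
  simp [stdHilbertBasis]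

noncomputable def blockEntry (T : L2Seq n →L[ℂ] L2Seq n) (i j : ℕ) : Matrix (Fin n) (Fin n) ℂ :=
  Matrix.of fun a b => ⟪stdVec n i a, T (stdVec n j b)⟫_ℂ

theorem blockEntry_injective : Function.Injective (blockEntry (n := n)) := by
  intro S T h
  refine (stdHilbertBasis n).continuousLinearMap_ext fun q =>
    (stdHilbertBasis n).ext_inner fun p => ?_
  simpa [blockEntry] using congr_fun₂ (congr_fun₂ h p.1 q.1) p.2 q.2

theorem blockEntry_one (i j : ℕ) :
    blockEntry (1 : L2Seq n →L[ℂ] L2Seq n) i j = if i = j then 1 else 0 := by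
  ext a b
  by_cases hij : i = j
  · subst hij
    simp [blockEntry, inner_stdVec_left, stdVec_apply, Matrix.one_apply]
  · simp [blockEntry, inner_stdVec_left, stdVec_apply, hij]

theorem blockEntry_sub (S T : L2Seq n →L[ℂ] L2Seq n) :
    blockEntry (S - T) = blockEntry S - blockEntry T := by
  ext i j a b
  simp [blockEntry]

theorem hasSum_blockEntry_comp (S T : L2Seq n →L[ℂ] L2Seq n) (i j : ℕ) :
    HasSum (fun k => blockEntry S i k * blockEntry T k j) (blockEntry (S.comp T) i j) := by
  refine Pi.hasSum.2 fun a => Pi.hasSum.2 fun b => ?_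
  refine HasSum.prod_fiberwise
    (f := fun q : ℕ × Fin n => blockEntry S i q.1 a q.2 * blockEntry T q.1 j q.2 b) ?_
    fun _ => hasSum_fintype _
  simpa [blockEntry] using
    (stdHilbertBasis n).hasSum_inner_apply S (stdVec n i a) (T (stdVec n j b))

theorem exists_isHilbertSchmidtOp_blockEntry_eq (M : ℕ → ℕ → Matrix (Fin n) (Fin n) ℂ)
    (hM : Summable fun pq : (ℕ × Fin n) × (ℕ × Fin n) => ‖M pq.1.1 pq.2.1 pq.1.2 pq.2.2‖ ^ 2) :
    ∃ A : L2Seq n →L[ℂ] L2Seq n, IsHilbertSchmidtOp n A ∧ blockEntry A = M := by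
  obtain ⟨A, hAM, hA⟩ := (stdHilbertBasis n).exists_inner_apply_eq_of_summable_sq
    (stdHilbertBasis n) (fun p q => M p.1 q.1 p.2 q.2) hM
  simp only [stdHilbertBasis_apply] at hAM hA
  exact ⟨A, hA, funext₂ fun i j => Matrix.ext fun a b => hAM (i, a) (j, b)⟩

end BlockMatrix

section Hankel

/-- The Hankel matrix `[γ^{(i+k)}]_{i ≥ 0, k ≥ 1}`, with `k` shifted to start at `0`. -/
def hankel {α : Type*} (g : ℤ → α) (i k : ℕ) : α := g (i + k + 1)

theorem summable_comp_add_of_summable_succ_mul {φ : ℕ → ℝ} (hφ : 0 ≤ φ)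
    (h : Summable fun m : ℕ => ((m : ℝ) + 1) * φ m) : Summable fun p : ℕ × ℕ => φ (p.1 + p.2) := by
  rw [← Finset.HasAntidiagonal.sigmaAntidiagonalEquivProd.summable_iff]
  refine (summable_sigma_of_nonneg fun _ => hφ _).2 ⟨fun _ => .of_finite, h.congr fun m => ?_⟩
  have hfiber (y : Finset.HasAntidiagonal.antidiagonal m) :
      φ ((y : ℕ × ℕ).1 + (y : ℕ × ℕ).2) = φ m := by
    rw [Finset.HasAntidiagonal.mem_antidiagonal.1 y.2]
  simp [Finset.HasAntidiagonal.sigmaAntidiagonalEquivProd, hfiber]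

theorem summable_succ_mul_of_summable_abs_mul {ψ : ℤ → ℝ}
    (h : Summable fun k : ℤ => (|k| : ℝ) * ψ k) :
    Summable fun m : ℕ => ((m : ℝ) + 1) * ψ (m + 1) := by
  refine (h.comp_injective (i := fun m : ℕ => (m : ℤ) + 1) fun _ _ hm => by simpa using hm).congr
    fun m => ?_
  simp only [Function.comp_apply]
  rw [abs_of_nonneg (by positivity)]
  push_cast
  ring

theorem summable_hankel_sq {m m' R : Type*} [Fintype m] [Fintype m'] [SeminormedAddCommGroup R]
    {g : ℤ → Matrix m m' R} (hg : ∀ a b, Summable fun k : ℤ => (|k| : ℝ) * ‖g k a b‖ ^ 2) :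
    Summable fun pq : (ℕ × m) × (ℕ × m') => ‖hankel g pq.1.1 pq.2.1 pq.1.2 pq.2.2‖ ^ 2 := by
  rw [← (Equiv.prodProdProdComm ℕ m ℕ m').symm.summable_iff]
  refine (summable_prod_of_nonneg fun _ => sq_nonneg _).2 ⟨fun _ => .of_finite, ?_⟩
  simp only [tsum_fintype, Equiv.prodProdProdComm_symm, Equiv.prodProdProdComm_apply, hankel]
  refine summable_sum fun ab _ => (summable_comp_add_of_summable_succ_mul
    (φ := fun m => ‖g (m + 1) ab.1 ab.2‖ ^ 2) (fun _ => sq_nonneg _)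
    (summable_succ_mul_of_summable_abs_mul (ψ := fun k => ‖g k ab.1 ab.2‖ ^ 2)
      (hg ab.1 ab.2))).congr fun ik => ?_
  push_cast
  rfl

end Hankel

/-- let `γ : S¹ → GL(n,ℂ)` be an invertible matrix loop whose
Fourier coefficients `g` (and those `h` of `γ⁻¹`) satisfy the Besov condition
`Σ_k |k|‖γ^{(k)}‖² < ∞`.  Then `I − T(γ)T(γ⁻¹)` is trace class: it is the
product of two Hilbert–Schmidt operators.  Here `T(γ)`, `T(γ⁻¹)` are the
block Toeplitz operators on `ℓ²(ℕ,ℂⁿ)` with `(i,j)`-blocks `γ^{(i−j)}`,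
`(γ⁻¹)^{(i−j)}`. -/
theorem one_sub_toeplitz_product_traceClass (n : ℕ)
    (g h : ℤ → Matrix (Fin n) (Fin n) ℂ)
    (hBesovG : ∀ a b : Fin n, Summable fun k : ℤ => (|k| : ℝ) * ‖g k a b‖ ^ 2)
    (hBesovH : ∀ a b : Fin n, Summable fun k : ℤ => (|k| : ℝ) * ‖h k a b‖ ^ 2)
    (hconv : ∀ m : ℤ,
      HasSum (fun k : ℤ => g (m - k) * h k)
        (if m = 0 then (1 : Matrix (Fin n) (Fin n) ℂ) else 0))
    (Tg Th : L2Seq n →L[ℂ] L2Seq n)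
    (hTg : ∀ (i j : ℕ) (a b : Fin n),
      (inner ℂ (stdVec n i a) (Tg (stdVec n j b)) : ℂ) = g ((i : ℤ) - j) a b)
    (hTh : ∀ (i j : ℕ) (a b : Fin n),
      (inner ℂ (stdVec n i a) (Th (stdVec n j b)) : ℂ) = h ((i : ℤ) - j) a b) :
    ∃ A B : L2Seq n →L[ℂ] L2Seq n,
      IsHilbertSchmidtOp n A ∧ IsHilbertSchmidtOp n B ∧
        (1 : L2Seq n →L[ℂ] L2Seq n) - Tg.comp Th = A.comp B := by
  have hBesovHneg (a b : Fin n) : Summable fun k : ℤ => (|k| : ℝ) * ‖h (-k) a b‖ ^ 2 := by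
    simpa [Function.comp_def] using (hBesovH a b).comp_injective neg_injective
  obtain ⟨A, hA, hAg⟩ := exists_isHilbertSchmidtOp_blockEntry_eq (hankel g)
    (summable_hankel_sq hBesovG)
  obtain ⟨B, hB, hBh⟩ := exists_isHilbertSchmidtOp_blockEntry_eq (hankel fun k => h (-k))
    (summable_hankel_sq hBesovHneg)
  refine ⟨A, B, hA, hB, blockEntry_injective (funext₂ fun i j => ?_)⟩
  have hTg' (i j : ℕ) : blockEntry Tg i j = g (i - j) := Matrix.ext (hTg i j)
  have hTh' (i j : ℕ) : blockEntry Th i j = h (i - j) := Matrix.ext (hTh i j)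
  have hToeplitz : HasSum (fun k : ℕ => g (i - k) * h (k - j)) (blockEntry (Tg.comp Th) i j) := by
    simpa only [hTg', hTh'] using hasSum_blockEntry_comp Tg Th i j
  have hHankel : HasSum (fun k : ℕ => g (i - (-(k + 1) : ℤ)) * h (-(k + 1) - j))
      (blockEntry (A.comp B) i j) := by
    convert hasSum_blockEntry_comp A B i j using 2 with k
    rw [hAg, hBh, hankel, hankel, sub_neg_eq_add, ← add_assoc]
    congr 2
    ring
  have hLaurent : HasSum (fun k : ℤ => g (i - k) * h (k - j)) (if i = j then 1 else 0) := by
    simpa [Function.comp_def, sub_eq_zero] using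
      (Equiv.subRight (j : ℤ)).hasSum_iff.2 (hconv (i - j))
  have hsum := (HasSum.of_nat_of_neg_add_one (f := fun k : ℤ => g (i - k) * h (k - j))
    hToeplitz hHankel).unique hLaurent
  rw [blockEntry_sub, Pi.sub_apply, Pi.sub_apply, blockEntry_one, ← hsum, add_sub_cancel_left]
end

section
/- Let γ : S¹ → GL(n,ℂ) extend analytically to a neighborhood of the unit circle, and define the operator P on boundary functions by (Pψ)(z) = pr₊( ψ(z) + (1/2πi) ∮ [γ(z)γ^{−1}(ζ) − I]/(ζ − z) · ψ(ζ) dζ ), where pr₊ is the projection onto the Hardy space of functions analytic inside the circle and the contour integral is taken with |ζ| < |z|. Then in the Fourier basis, P coincides with the operator T(γ)T(γ^{−1}), i.e., its (i,j)-block matrix entry is δᵢⱼ I − Σ_{k≥1} γ^{(i+k)}(γ^{−1})^{(−j−k)}. -/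
/-!
On the inner circle `|ζ| = ρ < |z| = 1` the Cauchy kernel expands as
`(ζ - z)⁻¹ = -∑_{m ≥ 0} z^(-m-1) ζ^m`, so integrating it against the Laurent series
`ζ ↦ (γ(z) γ⁻¹(ζ) - 1) ζ^j` keeps only the coefficients of `ζ^(-m-1)`: the inner integral is
`-∑_m z^(-m-1) γ(z) (γ⁻¹)^(-j-m-1)`, and the identity term drops out because `j ≥ 0`.
Integrating this against `z^(-i-1)` on the unit circle reads off the coefficient
`γ^(i+m+1)` of each term. Every exchange of a sum with a circle integral is justified by the
uniform absolute convergence of the Laurent series on the circle in question.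
-/

open Complex Metric MeasureTheory Filter
open scoped Real

section SeriesIntegration

variable {E ι : Type*} [NormedAddCommGroup E]

theorem continuousOn_of_hasSum_of_norm_le [CompleteSpace E] {β : Type*} [TopologicalSpace β]
    {f : ι → β → E} {F : β → E} {s : Set β} {u : ι → ℝ} (hf : ∀ i, ContinuousOn (f i) s)
    (hu : Summable u) (hfu : ∀ i, ∀ x ∈ s, ‖f i x‖ ≤ u i)
    (hF : ∀ x ∈ s, HasSum (fun i => f i x) (F x)) :
    ContinuousOn F s :=
  (continuousOn_tsum hf hu hfu).congr fun x hx => (hF x hx).tsum_eq.symm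

variable [NormedSpace ℂ E] [Countable ι]

theorem hasSum_circleIntegral_of_norm_le {f : ι → ℂ → E} {F : ℂ → E} {c : ℂ} {R : ℝ}
    {u : ι → ℝ} (hR : 0 ≤ R) (hf : ∀ i, ContinuousOn (f i) (sphere c R)) (hu : Summable u)
    (hfu : ∀ i, ∀ z ∈ sphere c R, ‖f i z‖ ≤ u i)
    (hF : ∀ z ∈ sphere c R, HasSum (fun i => f i z) (F z)) :
    HasSum (fun i => ∮ z in C(c, R), f i z) (∮ z in C(c, R), F z) := by
  have hmem : ∀ θ, circleMap c R θ ∈ sphere c R := circleMap_mem_sphere c hR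
  refine intervalIntegral.hasSum_integral_of_dominated_convergence (fun i _ => R * u i)
    (fun i => ?_) (fun i => .of_forall fun θ _ => ?_) (.of_forall fun _ _ => hu.mul_left R)
    intervalIntegrable_const (.of_forall fun θ _ => (hF _ (hmem θ)).const_smul _)
  · simp only [deriv_circleMap]
    exact (((continuous_circleMap 0 R).mul continuous_const).smul
      ((hf i).comp_continuous (continuous_circleMap c R) hmem)).aestronglyMeasurable
  · simp only [deriv_circleMap, norm_smul, norm_mul, norm_circleMap_zero, norm_I, mul_one,
      abs_of_nonneg hR]
    exact mul_le_mul_of_nonneg_left (hfu i _ (hmem θ)) hR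

end SeriesIntegration

theorem circleIntegral_zpow {R : ℝ} (hR : 0 < R) (k : ℤ) :
    (∮ z in C(0, R), z ^ k) = if k = -1 then 2 * π * I else 0 := by
  split_ifs with hk
  · subst hk
    simpa using
      circleIntegral.integral_sub_inv_of_mem_ball (mem_ball_self hR : (0 : ℂ) ∈ ball 0 R)
  · simpa using circleIntegral.integral_sub_zpow_of_ne hk 0 0 R

theorem hasSum_zpow_mul_laurent {c : ℤ → ℂ} {ζ s : ℂ} (hs : HasSum (fun k => c k * ζ ^ k) s)
    (hζ : ζ ≠ 0) (q : ℤ) : HasSum (fun k => c (k - q) * ζ ^ k) (ζ ^ q * s) := by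
  rw [← (Equiv.addRight q).hasSum_iff]
  refine (hs.mul_left (ζ ^ q)).congr_fun fun k => ?_
  simp only [Function.comp_apply, Equiv.coe_addRight, add_sub_cancel_right, zpow_add₀ hζ]
  ring

theorem hasSum_inv_sub_of_norm_lt {ζ z : ℂ} (h : ‖ζ‖ < ‖z‖) :
    HasSum (fun m : ℕ => -z ^ (-(m : ℤ) - 1) * ζ ^ m) (ζ - z)⁻¹ := by
  have hz : z ≠ 0 := norm_pos_iff.mp ((norm_nonneg ζ).trans_lt h)
  have hq : ‖ζ / z‖ < 1 := by rwa [norm_div, div_lt_one (norm_pos_iff.mpr hz)]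
  have hsum : -z⁻¹ * (1 - ζ / z)⁻¹ = (ζ - z)⁻¹ := by
    rw [neg_mul, ← mul_inv, mul_sub, mul_one, mul_div_cancel₀ _ hz, ← inv_neg, neg_sub]
  rw [← hsum]
  refine ((hasSum_geometric_of_norm_lt_one hq).mul_left _).congr_fun fun m => ?_
  rw [div_pow, zpow_sub₀ hz, zpow_neg, zpow_natCast, zpow_one]
  field_simp

section Laurent

variable {ρ : ℝ} {c : ℤ → ℂ} {F : ℂ → ℂ}

theorem norm_mul_zpow_of_mem_sphere {ζ : ℂ} (hζ : ζ ∈ sphere (0 : ℂ) ρ) (a : ℂ) (k : ℤ) :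
    ‖a * ζ ^ k‖ = ‖a‖ * ρ ^ k := by
  rw [norm_mul, norm_zpow, mem_sphere_zero_iff_norm.mp hζ]

theorem summable_norm_mul_zpow_of_hasSum_laurent (hρ : 0 ≤ ρ)
    (hF : ∀ ζ ∈ sphere (0 : ℂ) ρ, HasSum (fun k => c k * ζ ^ k) (F ζ)) :
    Summable fun k => ‖c k‖ * ρ ^ k := by
  simpa [abs_of_nonneg hρ] using (hF ρ (by simp [abs_of_nonneg hρ])).summable.norm

theorem norm_le_tsum_of_hasSum_laurent (hρ : 0 ≤ ρ)
    (hF : ∀ ζ ∈ sphere (0 : ℂ) ρ, HasSum (fun k => c k * ζ ^ k) (F ζ)) {ζ : ℂ}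
    (hζ : ζ ∈ sphere (0 : ℂ) ρ) : ‖F ζ‖ ≤ ∑' k, ‖c k‖ * ρ ^ k :=
  (hF ζ hζ).norm_le_of_bounded (summable_norm_mul_zpow_of_hasSum_laurent hρ hF).hasSum
    fun k => (norm_mul_zpow_of_mem_sphere hζ _ k).le

theorem continuousOn_zpow_sphere (hρ : 0 < ρ) (k : ℤ) :
    ContinuousOn (fun ζ : ℂ => ζ ^ k) (sphere 0 ρ) :=
  continuousOn_id.zpow₀ k fun _ hζ => .inl (ne_of_mem_sphere hζ hρ.ne')

theorem continuousOn_of_hasSum_laurent (hρ : 0 < ρ)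
    (hF : ∀ ζ ∈ sphere (0 : ℂ) ρ, HasSum (fun k => c k * ζ ^ k) (F ζ)) :
    ContinuousOn F (sphere 0 ρ) :=
  continuousOn_of_hasSum_of_norm_le (f := fun k ζ => c k * ζ ^ k)
    (fun k => continuousOn_const.mul (continuousOn_zpow_sphere hρ k))
    (summable_norm_mul_zpow_of_hasSum_laurent hρ.le hF)
    (fun k _ hζ => (norm_mul_zpow_of_mem_sphere hζ _ k).le) hF

theorem circleIntegral_eq_of_hasSum_laurent (hρ : 0 < ρ)
    (hF : ∀ ζ ∈ sphere (0 : ℂ) ρ, HasSum (fun k => c k * ζ ^ k) (F ζ)) :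
    (∮ ζ in C(0, ρ), F ζ) = 2 * π * I * c (-1) := by
  refine (hasSum_circleIntegral_of_norm_le (f := fun k ζ => c k * ζ ^ k) hρ.le
    (fun k => continuousOn_const.mul (continuousOn_zpow_sphere hρ k))
    (summable_norm_mul_zpow_of_hasSum_laurent hρ.le hF)
    (fun k _ hζ => (norm_mul_zpow_of_mem_sphere hζ _ k).le) hF).unique ?_
  simp only [circleIntegral.integral_const_mul, circleIntegral_zpow hρ, mul_ite, mul_zero]
  rw [mul_comm _ (c (-1))]
  exact (hasSum_ite_eq (-1 : ℤ) _).congr_fun fun k => by split_ifs with hk <;> simp [hk]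

theorem hasSum_circleIntegral_of_hasSum_laurent {ι : Type*} [Countable ι] (hρ : 0 < ρ)
    {c : ι → ℤ → ℂ} {F : ι → ℂ → ℂ} {G : ℂ → ℂ} {u : ι → ℝ}
    (hF : ∀ i, ∀ ζ ∈ sphere (0 : ℂ) ρ, HasSum (fun k => c i k * ζ ^ k) (F i ζ))
    (hu : Summable u) (hFu : ∀ i, ∀ ζ ∈ sphere (0 : ℂ) ρ, ‖F i ζ‖ ≤ u i)
    (hG : ∀ ζ ∈ sphere (0 : ℂ) ρ, HasSum (fun i => F i ζ) (G ζ)) :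
    HasSum (fun i => 2 * π * I * c i (-1)) (∮ ζ in C(0, ρ), G ζ) := by
  simpa only [circleIntegral_eq_of_hasSum_laurent hρ (hF _)] using
    hasSum_circleIntegral_of_norm_le hρ.le (fun i => continuousOn_of_hasSum_laurent hρ (hF i))
      hu hFu hG

theorem hasSum_circleIntegral_inv_sub_mul_of_hasSum_laurent (hρ : 0 < ρ)
    (hF : ∀ ζ ∈ sphere (0 : ℂ) ρ, HasSum (fun k => c k * ζ ^ k) (F ζ)) {z : ℂ} (hz : ρ < ‖z‖) :
    HasSum (fun m : ℕ => -(c (-(m : ℤ) - 1) * z ^ (-(m : ℤ) - 1)))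
      ((2 * π * I)⁻¹ * ∮ ζ in C(0, ρ), (ζ - z)⁻¹ * F ζ) := by
  have hz0 : 0 < ‖z‖ := hρ.trans hz
  set M := ∑' k, ‖c k‖ * ρ ^ k
  have hterm : ∀ m : ℕ, ‖z‖ ^ (-(m : ℤ) - 1) * ρ ^ m * M = ‖z‖⁻¹ * M * (ρ / ‖z‖) ^ m := by
    intro m
    rw [zpow_sub₀ hz0.ne', zpow_neg, zpow_natCast, zpow_one, div_pow]
    field_simp
  have hsum := hasSum_circleIntegral_of_hasSum_laurent hρ
    (c := fun (m : ℕ) k => -z ^ (-(m : ℤ) - 1) * c (k - m))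
    (F := fun (m : ℕ) ζ => -z ^ (-(m : ℤ) - 1) * (ζ ^ (m : ℤ) * F ζ))
    (G := fun ζ => (ζ - z)⁻¹ * F ζ) (u := fun m => ‖z‖ ^ (-(m : ℤ) - 1) * ρ ^ m * M)
    (fun m ζ hζ => ((hasSum_zpow_mul_laurent (hF ζ hζ) (ne_of_mem_sphere hζ hρ.ne') m).mul_left
      _).congr_fun fun k => by ring)
    (by simpa only [hterm] using
      (summable_geometric_of_lt_one (div_nonneg hρ.le hz0.le) ((div_lt_one hz0).2 hz)).mul_left _)
    (fun m ζ hζ => by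
      rw [norm_mul, norm_mul, norm_neg, norm_zpow, norm_zpow, mem_sphere_zero_iff_norm.mp hζ,
        zpow_natCast, mul_assoc]
      gcongr
      exact norm_le_tsum_of_hasSum_laurent hρ.le hF hζ)
    (fun ζ hζ => ((hasSum_inv_sub_of_norm_lt (z := z)
      (by rwa [mem_sphere_zero_iff_norm.mp hζ])).mul_right (F ζ)).congr_fun fun m => by
        rw [zpow_natCast]
        ring)
  refine (hsum.mul_left (2 * π * I)⁻¹).congr_fun fun m => ?_
  rw [inv_mul_cancel_left₀ two_pi_I_ne_zero, show (-1 : ℤ) - m = -m - 1 by ring]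
  ring

end Laurent

section Plemelj

variable {n : ℕ} {ρ : ℝ} {g h : ℤ → Matrix (Fin n) (Fin n) ℂ}
  {Γ Γi : ℂ → Matrix (Fin n) (Fin n) ℂ} {a b : Fin n}

theorem hasSum_laurent_mulVec_apply
    (hΓ : ∀ z ∈ sphere (0 : ℂ) ρ, ∀ c, HasSum (fun k => g k a c * z ^ k) (Γ z a c))
    (v : Fin n → ℂ) {z : ℂ} (hz : z ∈ sphere (0 : ℂ) ρ) :
    HasSum (fun k => (∑ c, g k a c * v c) * z ^ k) (∑ c, Γ z a c * v c) :=
  (hasSum_sum fun c _ => (hΓ z hz c).mul_right (v c)).congr_fun fun k => by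
    rw [Finset.sum_mul]
    exact Finset.sum_congr rfl fun c _ => by ring

theorem hasSum_laurent_vecMul_apply_sub
    (hΓi : ∀ ζ ∈ sphere (0 : ℂ) ρ, ∀ c, HasSum (fun k => h k c b * ζ ^ k) (Γi ζ c b))
    (u : Fin n → ℂ) (e : ℂ) {ζ : ℂ} (hζ : ζ ∈ sphere (0 : ℂ) ρ) :
    HasSum (fun k => ((∑ c, u c * h k c b) - if k = 0 then e else 0) * ζ ^ k)
      ((∑ c, u c * Γi ζ c b) - e) :=
  ((hasSum_sum fun c _ => (hΓi ζ hζ c).mul_left (u c)).sub (hasSum_ite_eq 0 e)).congr_fun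
    fun k => by
      rw [sub_mul, Finset.sum_mul]
      congr 1
      · exact Finset.sum_congr rfl fun c _ => by ring
      · split_ifs with hk <;> simp [hk]

theorem hasSum_plemelj_inner (hρ : 0 < ρ)
    (hΓi : ∀ ζ ∈ sphere (0 : ℂ) ρ, ∀ c, HasSum (fun k => h k c b * ζ ^ k) (Γi ζ c b))
    (u : Fin n → ℂ) (e : ℂ) (j : ℕ) {z : ℂ} (hz : ρ < ‖z‖) :
    HasSum (fun m : ℕ => -((∑ c, u c * h (-(j : ℤ) - m - 1) c b) * z ^ (-(m : ℤ) - 1)))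
      ((2 * π * I)⁻¹ *
        ∮ ζ in C(0, ρ), (ζ - z)⁻¹ * ((∑ c, u c * Γi ζ c b) - e) * ζ ^ j) := by
  convert hasSum_circleIntegral_inv_sub_mul_of_hasSum_laurent hρ (fun ζ hζ =>
    hasSum_zpow_mul_laurent (hasSum_laurent_vecMul_apply_sub hΓi u e hζ)
      (ne_of_mem_sphere hζ hρ.ne') j) hz using 3 with m
  · rw [if_neg (by omega), sub_zero, show -(m : ℤ) - 1 - j = -j - m - 1 by ring]
  · ext ζ
    rw [zpow_natCast]
    ring

theorem norm_sum_mul_le_of_hasSum_laurent (hρ : 0 ≤ ρ)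
    (hΓ : ∀ z ∈ sphere (0 : ℂ) ρ, ∀ c, HasSum (fun k => g k a c * z ^ k) (Γ z a c))
    (v : Fin n → ℂ) {z : ℂ} (hz : z ∈ sphere (0 : ℂ) ρ) :
    ‖∑ c, Γ z a c * v c‖ ≤ ∑ c, (∑' k, ‖g k a c‖ * ρ ^ k) * ‖v c‖ :=
  (norm_sum_le _ _).trans <| Finset.sum_le_sum fun c _ => by
    rw [norm_mul]
    gcongr
    exact norm_le_tsum_of_hasSum_laurent hρ (hΓ · · c) hz

theorem summable_sum_mul_norm_neg_coeff (hh : ∀ c, Summable fun k => ‖h k c b‖) (j : ℕ)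
    (C : Fin n → ℝ) : Summable fun m : ℕ => ∑ c, C c * ‖h (-(j : ℤ) - m - 1) c b‖ :=
  summable_sum fun c _ =>
    ((hh c).comp_injective fun m₁ m₂ hm => by simpa using hm).mul_left (C c)

theorem norm_plemelj_term_le
    (hΓ : ∀ z ∈ sphere (0 : ℂ) 1, ∀ c, HasSum (fun k => g k a c * z ^ k) (Γ z a c))
    (j m : ℕ) {z : ℂ} (hz : z ∈ sphere (0 : ℂ) 1) :
    ‖-((∑ c, Γ z a c * h (-(j : ℤ) - m - 1) c b) * z ^ (-(m : ℤ) - 1))‖ ≤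
      ∑ c, (∑' k, ‖g k a c‖) * ‖h (-(j : ℤ) - m - 1) c b‖ := by
  rw [norm_neg, norm_mul_zpow_of_mem_sphere hz, one_zpow, mul_one]
  simpa using norm_sum_mul_le_of_hasSum_laurent zero_le_one hΓ _ hz

theorem continuousOn_plemelj_tail
    (hΓ : ∀ z ∈ sphere (0 : ℂ) 1, ∀ c, HasSum (fun k => g k a c * z ^ k) (Γ z a c))
    (hh : ∀ c, Summable fun k => ‖h k c b‖) (j : ℕ) :
    ContinuousOn (fun z => ∑' m : ℕ,
      -((∑ c, Γ z a c * h (-(j : ℤ) - m - 1) c b) * z ^ (-(m : ℤ) - 1))) (sphere 0 1) :=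
  continuousOn_tsum (fun _ => ((continuousOn_of_hasSum_laurent one_pos fun _ hz =>
      hasSum_laurent_mulVec_apply hΓ _ hz).mul (continuousOn_zpow_sphere one_pos _)).neg)
    (summable_sum_mul_norm_neg_coeff hh j _) fun m _ hz => norm_plemelj_term_le hΓ j m hz

theorem hasSum_plemelj_outer
    (hΓ : ∀ z ∈ sphere (0 : ℂ) 1, ∀ c, HasSum (fun k => g k a c * z ^ k) (Γ z a c))
    (hh : ∀ c, Summable fun k => ‖h k c b‖) (i j : ℕ) :
    HasSum (fun m : ℕ => -∑ c, g ((i : ℤ) + m + 1) a c * h (-(j : ℤ) - m - 1) c b)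
      ((2 * π * I)⁻¹ * ∮ z in C(0, 1), z ^ (-(i : ℤ) - 1) * ∑' m : ℕ,
        -((∑ c, Γ z a c * h (-(j : ℤ) - m - 1) c b) * z ^ (-(m : ℤ) - 1))) := by
  have hsum := hasSum_circleIntegral_of_hasSum_laurent (ι := ℕ) one_pos
    (c := fun m k => -∑ c, g (k + i + m + 2) a c * h (-(j : ℤ) - m - 1) c b)
    (F := fun m z => -(z ^ (-(i : ℤ) - m - 2) * ∑ c, Γ z a c * h (-(j : ℤ) - m - 1) c b))
    (fun m z hz => (hasSum_zpow_mul_laurent (hasSum_laurent_mulVec_apply hΓ _ hz)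
      (ne_of_mem_sphere hz one_ne_zero) _).neg.congr_fun fun k => by
        rw [neg_mul, show k - (-(i : ℤ) - m - 2) = k + i + m + 2 by ring])
    (summable_sum_mul_norm_neg_coeff hh j _)
    (fun m z hz => by
      rw [norm_neg, norm_mul, norm_zpow, mem_sphere_zero_iff_norm.mp hz, one_zpow, one_mul]
      simpa using norm_sum_mul_le_of_hasSum_laurent zero_le_one hΓ _ hz)
    (fun z hz => ((Summable.of_norm_bounded (summable_sum_mul_norm_neg_coeff hh j _)
      fun m => norm_plemelj_term_le hΓ j m hz).hasSum.mul_left (z ^ (-(i : ℤ) - 1))).congr_fun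
        fun m => by
          rw [show -(i : ℤ) - m - 2 = (-(i : ℤ) - 1) + (-(m : ℤ) - 1) by ring,
            zpow_add₀ (ne_of_mem_sphere hz one_ne_zero)]
          ring)
  refine (hsum.mul_left _).congr_fun fun m => ?_
  rw [inv_mul_cancel_left₀ two_pi_I_ne_zero,
    show (-1 : ℤ) + i + m + 2 = i + m + 1 by ring]

end Plemelj

theorem circleIntegral_zpow_neg_sub_one_mul_pow {R : ℝ} (hR : 0 < R) (i j : ℕ) :
    (∮ z in C(0, R), z ^ (-(i : ℤ) - 1) * z ^ j) = if i = j then 2 * π * I else 0 := by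
  rw [circleIntegral.integral_congr hR.le fun z hz => (by
    rw [← zpow_natCast, ← zpow_add₀ (ne_of_mem_sphere hz hR.ne')] :
      z ^ (-(i : ℤ) - 1) * z ^ j = z ^ (-(i : ℤ) - 1 + j)), circleIntegral_zpow hR]
  exact if_congr (by omega) rfl rfl

theorem two_pi_I_inv_mul_circleIntegral_zpow_neg_sub_one_mul_ite {R : ℝ} (hR : 0 < R)
    (i j : ℕ) (p : Prop) [Decidable p] :
    (2 * π * I)⁻¹ * (∮ z in C(0, R), z ^ (-(i : ℤ) - 1) * if p then z ^ j else 0) =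
      if i = j ∧ p then 1 else 0 := by
  by_cases hp : p
  · simp only [hp, if_true, and_true, circleIntegral_zpow_neg_sub_one_mul_pow hR, mul_ite,
      inv_mul_cancel₀ two_pi_I_ne_zero, mul_zero]
  · simp [hp, circleIntegral]

theorem forall_mem_sphere_of_forall_le_norm_le {P : ℂ → Prop} {r R t : ℝ}
    (hP : ∀ z : ℂ, r ≤ ‖z‖ → ‖z‖ ≤ R → P z) (hr : r ≤ t) (hR : t ≤ R) :
    ∀ z ∈ sphere (0 : ℂ) t, P z := fun z hz =>
  hP z (by rwa [mem_sphere_zero_iff_norm.mp hz]) (by rwa [mem_sphere_zero_iff_norm.mp hz])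

theorem plemelj_operator_eq_toeplitz_product_general (n : ℕ) (r R ρ : ℝ)
    (hr0 : 0 < r) (hrρ : r < ρ) (hρ : ρ < 1) (hR : 1 < R)
    (g h : ℤ → Matrix (Fin n) (Fin n) ℂ)
    (Γ Γi : ℂ → Matrix (Fin n) (Fin n) ℂ)
    (hΓ : ∀ z : ℂ, r ≤ ‖z‖ → ‖z‖ ≤ R → ∀ a b,
      HasSum (fun k : ℤ => g k a b * z ^ k) (Γ z a b))
    (hΓi : ∀ z : ℂ, r ≤ ‖z‖ → ‖z‖ ≤ R → ∀ a b,
      HasSum (fun k : ℤ => h k a b * z ^ k) (Γi z a b)) :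
    ∀ (i j : ℕ) (a b : Fin n),
      (2 * Real.pi * Complex.I)⁻¹ *
        (∮ z in C(0, 1),
          z ^ (-(i : ℤ) - 1) *
            ((if a = b then z ^ (j : ℕ) else 0) +
              (2 * Real.pi * Complex.I)⁻¹ *
                ∮ ζ in C(0, ρ),
                  (ζ - z)⁻¹ *
                    ((∑ c, Γ z a c * Γi ζ c b) - (if a = b then 1 else 0)) *
                      ζ ^ (j : ℕ)))
        = (if i = j ∧ a = b then 1 else 0)
            - ∑' k : ℕ, ∑ c, g ((i : ℤ) + k + 1) a c * h (-(j : ℤ) - k - 1) c b := by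
  intro i j a b
  have hr1 : r ≤ 1 := (hrρ.trans hρ).le
  have hΓ1 : ∀ z ∈ sphere (0 : ℂ) 1, ∀ c, HasSum (fun k => g k a c * z ^ k) (Γ z a c) :=
    fun z hz => forall_mem_sphere_of_forall_le_norm_le hΓ hr1 hR.le z hz a
  have hΓiρ : ∀ ζ ∈ sphere (0 : ℂ) ρ, ∀ c, HasSum (fun k => h k c b * ζ ^ k) (Γi ζ c b) :=
    fun ζ hζ c => forall_mem_sphere_of_forall_le_norm_le hΓi hrρ.le (hρ.trans hR).le ζ hζ c b
  have hh : ∀ c, Summable fun k => ‖h k c b‖ := fun c => by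
    simpa using summable_norm_mul_zpow_of_hasSum_laurent zero_le_one fun z hz =>
      forall_mem_sphere_of_forall_le_norm_le hΓi hr1 hR.le z hz c b
  set T := fun z => ∑' m : ℕ,
    -((∑ c, Γ z a c * h (-(j : ℤ) - m - 1) c b) * z ^ (-(m : ℤ) - 1))
  have hinner : ∀ z ∈ sphere (0 : ℂ) 1, (2 * π * I)⁻¹ * (∮ ζ in C(0, ρ), (ζ - z)⁻¹ *
      ((∑ c, Γ z a c * Γi ζ c b) - (if a = b then 1 else 0)) * ζ ^ j) = T z := fun z hz =>
    (hasSum_plemelj_inner (hr0.trans hrρ) hΓiρ (Γ z a ·) _ j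
      (by rwa [mem_sphere_zero_iff_norm.mp hz])).tsum_eq.symm
  have hδ : CircleIntegrable (fun z => z ^ (-(i : ℤ) - 1) * if a = b then z ^ j else 0) 0 1 :=
    ((continuousOn_zpow_sphere one_pos _).mul (Continuous.if_const _ (continuous_pow j)
      continuous_const).continuousOn).circleIntegrable zero_le_one
  have hT : CircleIntegrable (fun z => z ^ (-(i : ℤ) - 1) * T z) 0 1 :=
    ((continuousOn_zpow_sphere one_pos _).mul
      (continuousOn_plemelj_tail hΓ1 hh j)).circleIntegrable zero_le_one
  rw [circleIntegral.integral_congr (g := fun z => (z ^ (-(i : ℤ) - 1) *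
      if a = b then z ^ j else 0) + z ^ (-(i : ℤ) - 1) * T z) zero_le_one fun z hz => by
    simp only [hinner z hz, mul_add], circleIntegral.integral_add hδ hT, mul_add,
    two_pi_I_inv_mul_circleIntegral_zpow_neg_sub_one_mul_ite one_pos,
    (hasSum_plemelj_outer hΓ1 hh i j).tsum_eq.symm, tsum_neg, sub_eq_add_neg]

/-- let `γ` be an invertible matrix loop, analytic on an annulus
`r ≤ |z| ≤ R` around the unit circle (with Laurent coefficients `g`, and with
inverse loop `γ⁻¹` having Laurent coefficients `h`).  The Plemelj operator
`P : ψ ↦ pr₊( ψ(z) + (1/2πi) ∮_{|ζ|=ρ} [γ(z)γ⁻¹(ζ) − I]/(ζ − z) ψ(ζ) dζ )`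
(the inner contour of radius `ρ < 1`, i.e. `|ζ| < |z|`) has, in the Fourier
basis, the `(i,j)`-block matrix entry
`δᵢⱼ I − Σ_{k≥1} γ^{(i+k)} (γ⁻¹)^{(−j−k)}`, i.e. it coincides with
`T(γ)T(γ⁻¹)`.  Entrywise: applying `P` to `ψ(z) = z^j e_b` and extracting the
`i`-th Fourier coefficient of component `a` gives the stated value. -/
theorem plemelj_operator_eq_toeplitz_product (n : ℕ) (r R ρ : ℝ)
    (hr0 : 0 < r) (hrρ : r < ρ) (hρ : ρ < 1) (hR : 1 < R)
    (g h : ℤ → Matrix (Fin n) (Fin n) ℂ)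
    (Γ Γi : ℂ → Matrix (Fin n) (Fin n) ℂ)
    (hΓ : ∀ z : ℂ, r ≤ ‖z‖ → ‖z‖ ≤ R → ∀ a b,
      HasSum (fun k : ℤ => g k a b * z ^ k) (Γ z a b))
    (hΓi : ∀ z : ℂ, r ≤ ‖z‖ → ‖z‖ ≤ R → ∀ a b,
      HasSum (fun k : ℤ => h k a b * z ^ k) (Γi z a b))
    (hinv : ∀ z : ℂ, r ≤ ‖z‖ → ‖z‖ ≤ R → Γ z * Γi z = 1) :
    ∀ (i j : ℕ) (a b : Fin n),
      (2 * Real.pi * Complex.I)⁻¹ *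
        (∮ z in C(0, 1),
          z ^ (-(i : ℤ) - 1) *
            ((if a = b then z ^ (j : ℕ) else 0) +
              (2 * Real.pi * Complex.I)⁻¹ *
                ∮ ζ in C(0, ρ),
                  (ζ - z)⁻¹ *
                    ((∑ c, Γ z a c * Γi ζ c b) - (if a = b then 1 else 0)) *
                      ζ ^ (j : ℕ)))
        = (if i = j ∧ a = b then 1 else 0)
            - ∑' k : ℕ, ∑ c, g ((i : ℤ) + k + 1) a c * h (-(j : ℤ) - k - 1) c b :=
  plemelj_operator_eq_toeplitz_product_general n r R ρ hr0 hrρ hρ hR g h Γ Γi hΓ hΓi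
end

section
/- Let C(z) be an n×n matrix with polynomial entries in z such that m = max_i ( j − i + n·deg C_{ij}(z) ) for every column j = 1,…,n, where m and n are coprime and deg denotes polynomial degree (with the convention that only finite entries achieve the max). Then the coefficients of the characteristic polynomial p_{C(z)}(λ) = λⁿ + c₁(z)λ^{n−1} + … + cₙ(z) satisfy n·deg c_s < ms for all s = 1,…,n−1, and deg cₙ = m, provided additionally that in every row there is a unique entry C_{ij} with m = j − i + n·deg C_{ij}. -/
/-!
Substituting `z = tⁿ`, `λ = y tᵐ` turns `λ - C(z)` into a matrix whose `(i, j)` entry has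
`t`-degree at most `m + i - j`. These bounds add up to `nm` along every permutation, so
`p(y tᵐ, tⁿ)` has `t`-degree at most `nm`, while the term `c_s(z) λ^(n-s)` alone contributes
`t`-degree `n deg c_s + m (n - s)` (it is the only one carrying `y^(n-s)`). Hence
`n deg c_s ≤ m s`, and the inequality is strict for `0 < s < n` since `n ∤ m s`.
For `cₙ = ± det C` the entries attaining their bound form the graph of a permutation, and its
term is the only one of the Leibniz expansion that reaches degree `m`.
-/

open Polynomial

theorem Nat.mul_ne_mul_of_coprime {m n s d : ℕ} (hcop : m.Coprime n) (hs : 0 < s) (hsn : s < n) :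
    n * d ≠ m * s := by
  intro h
  have hns : n ∣ s := hcop.symm.dvd_of_dvd_mul_left (Dvd.intro d h)
  exact (Nat.le_of_dvd hs hns).not_gt hsn

theorem exists_perm_forall_iff_of_existsUnique {ι : Type*} [Finite ι] {P : ι → ι → Prop}
    (hcol : ∀ j, ∃ i, P i j) (hrow : ∀ i, ∃! j, P i j) :
    ∃ τ : Equiv.Perm ι, ∀ i j, P i j ↔ i = τ j := by
  choose f hf hf_unique using hrow
  have hsurj : Function.Surjective f := fun j =>
    (hcol j).imp fun i hi => (hf_unique i j hi).symm
  let e := Equiv.ofBijective f (Finite.surjective_iff_bijective.mp hsurj)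
  refine ⟨e.symm, fun i j => ?_⟩
  rw [Equiv.eq_symm_apply]
  exact ⟨fun h => (hf_unique i j h).symm, fun h => h ▸ hf i⟩

theorem Equiv.Perm.sum_add_apply_sub {ι : Type*} [Fintype ι] (σ : Equiv.Perm ι) (d : ℤ)
    (w : ι → ℤ) : ∑ i, (d + w (σ i) - w i) = Fintype.card ι * d := by
  simp only [Finset.sum_sub_distrib, Finset.sum_add_distrib, Equiv.sum_comp σ w,
    Finset.sum_const, Finset.card_univ, nsmul_eq_mul]
  ring

namespace Matrix

variable {R ι : Type*} [Fintype ι] {c d : ℕ} {w : ι → ℤ}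

theorem mul_natDegree_prod_perm_le [CommSemiring R] {M : Matrix ι ι R[X]}
    (hM : ∀ i j, M i j ≠ 0 → (c : ℤ) * (M i j).natDegree ≤ d + w i - w j)
    (σ : Equiv.Perm ι) : c * (∏ i, M (σ i) i).natDegree ≤ Fintype.card ι * d := by
  by_cases hz : ∃ i, M (σ i) i = 0
  · obtain ⟨i, hi⟩ := hz
    rw [Finset.prod_eq_zero (f := fun j => M (σ j) j) (Finset.mem_univ i) hi, natDegree_zero,
      mul_zero]
    exact Nat.zero_le _
  simp only [not_exists] at hz
  have hprod := natDegree_prod_le Finset.univ fun i => M (σ i) i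
  zify at hprod ⊢
  calc (c : ℤ) * (∏ i, M (σ i) i).natDegree
      ≤ ∑ i, (c : ℤ) * (M (σ i) i).natDegree := by
        rw [← Finset.mul_sum]; gcongr
    _ ≤ ∑ i, ((d : ℤ) + w (σ i) - w i) := Finset.sum_le_sum fun i _ => hM _ _ (hz i)
    _ = Fintype.card ι * d := σ.sum_add_apply_sub _ _

theorem mul_natDegree_det_le [CommRing R] [DecidableEq ι] {M : Matrix ι ι R[X]}
    (hM : ∀ i j, M i j ≠ 0 → (c : ℤ) * (M i j).natDegree ≤ d + w i - w j) :
    c * M.det.natDegree ≤ Fintype.card ι * d := by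
  rcases c.eq_zero_or_pos with rfl | hc
  · simp
  rw [mul_comm, ← Nat.le_div_iff_mul_le hc, det_apply]
  refine natDegree_sum_le_of_forall_le _ _ fun σ _ => (natDegree_smul_le _ _).trans ?_
  rw [Nat.le_div_iff_mul_le hc, mul_comm]
  exact mul_natDegree_prod_perm_le hM σ

theorem mul_natDegree_prod_perm_lt [CommSemiring R] {M : Matrix ι ι R[X]}
    (hM : ∀ i j, M i j ≠ 0 → (c : ℤ) * (M i j).natDegree ≤ d + w i - w j)
    {σ : Equiv.Perm ι} (hσ : ∀ i, M (σ i) i ≠ 0) {k : ι}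
    (hk : (c : ℤ) * (M (σ k) k).natDegree < d + w (σ k) - w k) :
    c * (∏ i, M (σ i) i).natDegree < Fintype.card ι * d := by
  have hprod := natDegree_prod_le Finset.univ fun i => M (σ i) i
  zify at hprod ⊢
  calc (c : ℤ) * (∏ i, M (σ i) i).natDegree
      ≤ ∑ i, (c : ℤ) * (M (σ i) i).natDegree := by
        rw [← Finset.mul_sum]; gcongr
    _ < ∑ i, ((d : ℤ) + w (σ i) - w i) :=
        Finset.sum_lt_sum (fun i _ => hM _ _ (hσ i)) ⟨k, Finset.mem_univ k, hk⟩
    _ = Fintype.card ι * d := σ.sum_add_apply_sub _ _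

theorem mul_natDegree_prod_perm_eq [CommSemiring R] [NoZeroDivisors R] {M : Matrix ι ι R[X]}
    {σ : Equiv.Perm ι}
    (hσ : ∀ i, M (σ i) i ≠ 0 ∧ (c : ℤ) * (M (σ i) i).natDegree = d + w (σ i) - w i) :
    c * (∏ i, M (σ i) i).natDegree = Fintype.card ι * d := by
  rw [natDegree_prod _ _ fun i _ => (hσ i).1, Finset.mul_sum]
  zify
  rw [Finset.sum_congr rfl fun i _ => (hσ i).2, σ.sum_add_apply_sub]

theorem det_ne_zero_and_mul_natDegree_det_eq [CommRing R] [IsDomain R] [DecidableEq ι]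
    {M : Matrix ι ι R[X]}
    (hM : ∀ i j, M i j ≠ 0 → (c : ℤ) * (M i j).natDegree ≤ d + w i - w j)
    {τ : Equiv.Perm ι}
    (hτ : ∀ i j, M i j ≠ 0 ∧ (c : ℤ) * (M i j).natDegree = d + w i - w j ↔ i = τ j) :
    M.det ≠ 0 ∧ c * M.det.natDegree = Fintype.card ι * d := by
  set D := (∏ i, M (τ i) i).natDegree
  have hτD : c * D = Fintype.card ι * d :=
    mul_natDegree_prod_perm_eq fun i => (hτ (τ i) i).2 rfl
  have hcoeff_other : ∀ σ ≠ τ, (∏ i, M (σ i) i).coeff D = 0 := by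
    intro σ hστ
    by_cases hz : ∃ i, M (σ i) i = 0
    · obtain ⟨i, hi⟩ := hz
      rw [Finset.prod_eq_zero (f := fun j => M (σ j) j) (Finset.mem_univ i) hi, coeff_zero]
    simp only [not_exists] at hz
    obtain ⟨k, hk⟩ : ∃ k, σ k ≠ τ k := by
      by_contra! h
      exact hστ (Equiv.ext h)
    have hloose : (c : ℤ) * (M (σ k) k).natDegree < d + w (σ k) - w k :=
      (hM _ _ (hz k)).lt_of_ne fun heq => hk ((hτ _ _).1 ⟨hz k, heq⟩)
    refine coeff_eq_zero_of_natDegree_lt (Nat.lt_of_mul_lt_mul_left (a := c) ?_)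
    exact hτD ▸ mul_natDegree_prod_perm_lt hM hz hloose
  have hcoeff : M.det.coeff D ≠ 0 := by
    rw [det_apply, finsetSum_coeff, Finset.sum_eq_single τ
      (fun σ _ hσ => by rw [coeff_smul, hcoeff_other σ hσ, smul_zero])
      (fun h => absurd (Finset.mem_univ τ) h), coeff_smul, smul_ne_zero_iff_ne]
    exact leadingCoeff_ne_zero.mpr
      (Finset.prod_ne_zero_iff.mpr fun i _ => ((hτ (τ i) i).2 rfl).1)
  refine ⟨fun h => hcoeff (by rw [h, coeff_zero]), le_antisymm (mul_natDegree_det_le hM) ?_⟩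
  exact hτD ▸ Nat.mul_le_mul_left c (le_natDegree_of_ne_zero hcoeff)

end Matrix

namespace Polynomial

variable {R : Type*} [CommSemiring R]

noncomputable def expandC (n : ℕ) : R[X] →+* R[X][X] :=
  (expand R[X] n).toRingHom.comp (mapRingHom C)

theorem natDegree_expandC (n : ℕ) (a : R[X]) : (expandC n a).natDegree = a.natDegree * n := by
  simp only [expandC, RingHom.comp_apply, AlgHom.toRingHom_eq_coe, AlgHom.coe_toRingHom,
    coe_mapRingHom, natDegree_expand, natDegree_map_eq_of_injective C_injective]

theorem coeff_expandC {n : ℕ} (hn : 0 < n) (a : R[X]) (r : ℕ) :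
    (expandC n a).coeff r = if n ∣ r then C (a.coeff (r / n)) else 0 := by
  simp only [expandC, RingHom.comp_apply, AlgHom.toRingHom_eq_coe, AlgHom.coe_toRingHom,
    coe_mapRingHom, coeff_expand hn, coeff_map]

/-- `P(λ, z) ↦ P(y tᵐ, tⁿ)`, with `t` the outer variable and `y = C X` the inner one: the
`t`-degree of the image is the weighted degree of `P` in which `λ` has weight `m` and `z`
weight `n`. -/
noncomputable def weightedSubst (n m : ℕ) : R[X][X] →+* R[X][X] :=
  eval₂RingHom (expandC n) (C X * X ^ m)

theorem weightedSubst_X (n m : ℕ) : weightedSubst n m (X : R[X][X]) = C X * X ^ m :=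
  eval₂_X _ _

theorem weightedSubst_C (n m : ℕ) (a : R[X]) : weightedSubst n m (C a) = expandC n a :=
  eval₂_C _ _

theorem coeff_coeff_weightedSubst {n : ℕ} (hn : 0 < n) (m : ℕ) (P : R[X][X]) (k d : ℕ) :
    ((weightedSubst n m P).coeff (n * d + m * k)).coeff k = (P.coeff k).coeff d := by
  have hterm : ∀ e, ((expandC n (P.coeff e) * (C X * X ^ m) ^ e).coeff (n * d + m * k)).coeff k =
      if e = k then (P.coeff k).coeff d else 0 := by
    intro e
    rw [mul_pow, ← C_pow, ← pow_mul, ← mul_assoc, coeff_mul_X_pow']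
    split_ifs with hle hek hek
    · subst hek
      rw [coeff_mul_C, coeff_expandC hn, Nat.add_sub_cancel, if_pos (dvd_mul_right n d),
        Nat.mul_div_cancel_left d hn, coeff_C_mul, coeff_X_pow, if_pos rfl, mul_one]
    · rw [coeff_mul_C, coeff_expandC hn]
      split_ifs <;> simp [coeff_X_pow, Ne.symm hek]
    · exact absurd (hek ▸ Nat.le_add_left _ _) hle
    · rw [coeff_zero]
  rw [weightedSubst, coe_eval₂RingHom, eval₂_eq_sum, Polynomial.sum, finsetSum_coeff,
    finsetSum_coeff, Finset.sum_congr rfl fun e _ => hterm e, Finset.sum_ite_eq']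
  split_ifs with hk
  · rfl
  · rw [notMem_support_iff.mp hk, coeff_zero]

theorem le_natDegree_weightedSubst {n : ℕ} (hn : 0 < n) (m : ℕ) {P : R[X][X]} {k : ℕ}
    (hk : P.coeff k ≠ 0) :
    n * (P.coeff k).natDegree + m * k ≤ (weightedSubst n m P).natDegree := by
  refine le_natDegree_of_ne_zero fun h => hk ?_
  have := coeff_coeff_weightedSubst hn m P k (P.coeff k).natDegree
  rw [h, coeff_zero] at this
  exact leadingCoeff_eq_zero.mp this.symm

end Polynomial

namespace Matrix

variable {R ι : Type*} [CommRing R] [Fintype ι] [DecidableEq ι] {n m : ℕ} {w : ι → ℤ}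
  {C : Matrix ι ι R[X]}

theorem natDegree_charmatrix_map_weightedSubst_le
    (hC : ∀ i j, C i j ≠ 0 → (n : ℤ) * (C i j).natDegree ≤ m + w i - w j) (i j : ι)
    (hij : ((charmatrix C).map (weightedSubst n m)) i j ≠ 0) :
    (((charmatrix C).map (weightedSubst n m)) i j).natDegree ≤ (m : ℤ) + w i - w j := by
  have hexpand : C i j ≠ 0 → ((expandC n (C i j)).natDegree : ℤ) ≤ m + w i - w j := by
    intro hC0
    rw [natDegree_expandC, Nat.cast_mul, mul_comm]
    exact hC i j hC0
  rw [map_apply] at hij ⊢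
  obtain rfl | hne := eq_or_ne i j
  · rw [charmatrix_apply_eq, map_sub, weightedSubst_X, weightedSubst_C, add_sub_cancel_right]
    have hdiag : (expandC n (C i i)).natDegree ≤ m := by
      by_cases hC0 : C i i = 0
      · simp [hC0]
      · simpa using hexpand hC0
    exact_mod_cast (natDegree_sub_le _ _).trans (max_le (natDegree_C_mul_X_pow_le _ _) hdiag)
  · rw [charmatrix_apply_ne _ _ _ hne, map_neg, weightedSubst_C, neg_ne_zero] at hij
    rw [charmatrix_apply_ne _ _ _ hne, map_neg, weightedSubst_C, natDegree_neg]
    exact hexpand fun h => hij (by rw [h, map_zero])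

theorem mul_natDegree_charpoly_coeff_add_le (hn : 0 < n)
    (hC : ∀ i j, C i j ≠ 0 → (n : ℤ) * (C i j).natDegree ≤ m + w i - w j) {k : ℕ}
    (hk : C.charpoly.coeff k ≠ 0) :
    n * (C.charpoly.coeff k).natDegree + m * k ≤ Fintype.card ι * m := by
  have hdet : (weightedSubst n m C.charpoly).natDegree ≤ Fintype.card ι * m := by
    rw [charpoly, RingHom.map_det, RingHom.mapMatrix_apply]
    simpa using mul_natDegree_det_le (c := 1)
      (by simpa using natDegree_charmatrix_map_weightedSubst_le hC)
  exact (le_natDegree_weightedSubst hn m hk).trans hdet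

theorem charpoly_coeff_zero_eq_det_or_neg (M : Matrix ι ι R) :
    M.charpoly.coeff 0 = M.det ∨ M.charpoly.coeff 0 = -M.det := by
  rcases neg_one_pow_eq_or R (Fintype.card ι) with h | h <;>
    simp [M.det_eq_sign_charpoly_coeff, h]

end Matrix

theorem charpoly_coeff_degrees_general (n m : ℕ) (hn : 0 < n)
    (hcop : Nat.Coprime m n)
    (C : Matrix (Fin n) (Fin n) (Polynomial ℂ))
    (hdeg : ∀ i j, C i j ≠ 0 →
      (n : ℤ) * (C i j).natDegree ≤ (m : ℤ) + (i : ℕ) - (j : ℕ))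
    (hcolmax : ∀ j, ∃ i, C i j ≠ 0 ∧
      (n : ℤ) * (C i j).natDegree = (m : ℤ) + (i : ℕ) - (j : ℕ))
    (hrowuniq : ∀ i, ∃! j, C i j ≠ 0 ∧
      (n : ℤ) * (C i j).natDegree = (m : ℤ) + (i : ℕ) - (j : ℕ)) :
    (∀ s : ℕ, 1 ≤ s → s < n →
        (C.charpoly.coeff (n - s) = 0 ∨
          n * (C.charpoly.coeff (n - s)).natDegree < m * s)) ∧
    (C.charpoly.coeff 0 ≠ 0 ∧ (C.charpoly.coeff 0).natDegree = m) := by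
  refine ⟨fun s hs hsn => or_iff_not_imp_left.mpr fun hc => ?_, ?_⟩
  · have hle := Matrix.mul_natDegree_charpoly_coeff_add_le hn hdeg hc
    have hsplit : m * (n - s) + m * s = Fintype.card (Fin n) * m := by
      rw [← mul_add, Nat.sub_add_cancel hsn.le, Fintype.card_fin, mul_comm]
    have hbound : n * (C.charpoly.coeff (n - s)).natDegree ≤ m * s := by linarith
    exact hbound.lt_of_ne (Nat.mul_ne_mul_of_coprime hcop hs hsn)
  · obtain ⟨τ, hτ⟩ := exists_perm_forall_iff_of_existsUnique hcolmax hrowuniq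
    obtain ⟨hdet, hdeg_det⟩ := Matrix.det_ne_zero_and_mul_natDegree_det_eq hdeg hτ
    rw [Fintype.card_fin] at hdeg_det
    have hdeg_det' := Nat.eq_of_mul_eq_mul_left hn hdeg_det
    rcases C.charpoly_coeff_zero_eq_det_or_neg with h | h <;> rw [h]
    · exact ⟨hdet, hdeg_det'⟩
    · exact ⟨neg_ne_zero.mpr hdet, by rw [natDegree_neg, hdeg_det']⟩

/-- let `C(z)` be an `n×n` matrix of polynomials, with `m, n`
coprime, `0 < n < m`, satisfying the degree condition
`m = max_i (j − i + n·deg C_{ij})` in every column `j` (i.e. every entry obeys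
`n·deg C_{ij} ≤ m + i − j` and every column attains the value `m`), and
suppose that in every row there is a unique entry attaining
`m = j − i + n·deg C_{ij}`.  Then, writing the characteristic polynomial as
`p_{C(z)}(λ) = λⁿ + c₁(z)λ^{n−1} + … + cₙ(z)` (so `c_s = charpoly.coeff (n−s)`),
one has `n·deg c_s < m·s` for `s = 1,…,n−1` and `deg cₙ = m`. -/
theorem charpoly_coeff_degrees (n m : ℕ) (hn : 0 < n) (hnm : n < m)
    (hcop : Nat.Coprime m n)
    (C : Matrix (Fin n) (Fin n) (Polynomial ℂ))
    (hdeg : ∀ i j, C i j ≠ 0 →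
      (n : ℤ) * (C i j).natDegree ≤ (m : ℤ) + (i : ℕ) - (j : ℕ))
    (hcolmax : ∀ j, ∃ i, C i j ≠ 0 ∧
      (n : ℤ) * (C i j).natDegree = (m : ℤ) + (i : ℕ) - (j : ℕ))
    (hrowuniq : ∀ i, ∃! j, C i j ≠ 0 ∧
      (n : ℤ) * (C i j).natDegree = (m : ℤ) + (i : ℕ) - (j : ℕ)) :
    (∀ s : ℕ, 1 ≤ s → s < n →
        (C.charpoly.coeff (n - s) = 0 ∨
          n * (C.charpoly.coeff (n - s)).natDegree < m * s)) ∧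
    (C.charpoly.coeff 0 ≠ 0 ∧ (C.charpoly.coeff 0).natDegree = m) :=
  charpoly_coeff_degrees_general n m hn hcop C hdeg hcolmax hrowuniq
end
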